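/- arXiv:2106.12294 — 2 statements merged into one kernel-verified Lean document; each statement's English description precedes it below -/
import Mathlib

section
/- Let (x,λ) be a solution of (PD-AVD) with α > 3 and 1/2 ≥ θ > 1/(α−1) (so ξ := θα − θ − 1 > 0), and let (x*,λ*) be a primal-dual optimal solution. Then for every t ≥ t₀ one has ‖(x(t),λ(t)) − (x*,λ*)‖² ≤ 2·E_{x*,λ*}(t₀)/ξ (so the trajectory is bounded) and t·‖(ẋ(t), λ̇(t))‖ ≤ (1/θ)·(1/√ξ + 1)·√(2·E_{x*,λ*}(t₀)); in particular ‖(ẋ(t), λ̇(t))‖ = O(1/t) as t → ∞. -/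
open Set MeasureTheory Filter Topology Asymptotics
open scoped RealInnerProductSpace ENNReal

/-- The augmented Lagrangian `L_β(x,λ) = f(x) + ⟪λ, Ax − b⟫ + (β/2)‖Ax − b‖²`. -/
noncomputable def augLagrangian {X Y : Type*}
    [NormedAddCommGroup X] [InnerProductSpace ℝ X]
    [NormedAddCommGroup Y] [InnerProductSpace ℝ Y]
    (f : X → ℝ) (A : X →L[ℝ] Y) (b : Y) (β : ℝ) (u : X) (μ : Y) : ℝ :=
  f u + ⟪μ, A u - b⟫ + β / 2 * ‖A u - b‖ ^ 2

/-- The energy function `E_{z,μ}(t)` associated to a trajectory `(x,λ)` with velocities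
`(x',λ')`, where the product norm on `X × Y` is the Hilbert norm
`‖(u,v)‖² = ‖u‖² + ‖v‖²` and `ξ = θα − θ − 1`. -/
noncomputable def pdEnergy {X Y : Type*}
    [NormedAddCommGroup X] [InnerProductSpace ℝ X]
    [NormedAddCommGroup Y] [InnerProductSpace ℝ Y]
    (f : X → ℝ) (A : X →L[ℝ] Y) (b : Y) (α β θ : ℝ)
    (x : ℝ → X) (x' : ℝ → X) (l : ℝ → Y) (l' : ℝ → Y)
    (z : X) (μ : Y) (t : ℝ) : ℝ :=
  θ ^ 2 * t ^ 2 *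
      (augLagrangian f A b β (x t) μ - augLagrangian f A b β z (l t))
    + 1 / 2 * (‖x t - z + (θ * t) • x' t‖ ^ 2 + ‖l t - μ + (θ * t) • l' t‖ ^ 2)
    + (θ * α - θ - 1) / 2 * (‖x t - z‖ ^ 2 + ‖l t - μ‖ ^ 2)

/-!
Along a solution, substituting the dynamics into the derivative of the energy `E = E_{x*,λ*}`,
the coupling terms cancel because `(u, μ) ↦ (A* μ, -A u)` is skew, leaving
`Ė = θt (2θ G - ⟪∇ₓ L_β(x, λ*), x - x*⟫) - ξ θt ‖(ẋ, λ̇)‖²`, where `G = L_β(x, λ*) - L_β(x*, λ)`.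
Convexity gives `0 ≤ G ≤ ⟪∇ₓ L_β(x, λ*), x - x*⟫`, so `2θ ≤ 1` makes `E` nonincreasing.
Both bounds are read off `E(t) ≤ E(t₀)`: the `ξ`-term bounds the distance to `(x*, λ*)`, and
`θt (ẋ, λ̇) = v_{x*,λ*} - ((x, λ) - (x*, λ*))` together with the triangle inequality bounds the velocity.
-/

open scoped InnerProduct

theorem ConvexOn.inner_sub_le_sub_of_hasGradientAt {E : Type*} [NormedAddCommGroup E]
    [InnerProductSpace ℝ E] [CompleteSpace E] {f : E → ℝ} {g u : E}
    (hf : ConvexOn ℝ univ f) (hg : HasGradientAt f g u) (v : E) :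
    ⟪g, v - u⟫ ≤ f v - f u := by
  let φ : ℝ →ᵃ[ℝ] E := AffineMap.lineMap u v
  have hline : HasDerivAt (f ∘ φ) ⟪g, v - u⟫ 0 := by
    simpa using hg.hasFDerivAt.comp_hasDerivAt_of_eq (0 : ℝ) AffineMap.hasDerivAt_lineMap
      (AffineMap.lineMap_apply_zero u v).symm
  have hconv : ConvexOn ℝ univ (f ∘ φ) := by
    simpa using hf.comp_affineMap φ
  simpa [slope_def_field, φ] using
    hconv.le_slope_of_hasDerivAt (mem_univ 0) (mem_univ 1) one_pos hline

theorem HasGradientAt.comp_hasDerivAt {E : Type*} [NormedAddCommGroup E]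
    [InnerProductSpace ℝ E] [CompleteSpace E] {f : E → ℝ} {g : E} {γ : ℝ → E} {γ' : E} {t : ℝ}
    (hf : HasGradientAt f g (γ t)) (hγ : HasDerivAt γ γ' t) :
    HasDerivAt (fun s => f (γ s)) ⟪g, γ'⟫ t := by
  simpa [Function.comp_def] using hf.hasFDerivAt.comp_hasDerivAt t hγ

theorem hasDerivAt_sub_add_mul_smul {E : Type*} [NormedAddCommGroup E] [NormedSpace ℝ E]
    {y y' : ℝ → E} {y'' : E} {θ t : ℝ} (hy : HasDerivAt y (y' t) t) (hy' : HasDerivAt y' y'' t)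
    (w : E) :
    HasDerivAt (fun s => y s - w + (θ * s) • y' s) ((1 + θ) • y' t + (θ * t) • y'') t := by
  refine ((hy.sub_const w).add (((hasDerivAt_id t).const_mul θ).smul hy')).congr_deriv ?_
  simp only [id, mul_one]
  module

theorem sqrt_norm_add_sq_add_norm_add_sq_le {E F : Type*} [SeminormedAddCommGroup E]
    [SeminormedAddCommGroup F] (a c : E) (b d : F) :
    √(‖a + c‖ ^ 2 + ‖b + d‖ ^ 2) ≤ √(‖a‖ ^ 2 + ‖b‖ ^ 2) + √(‖c‖ ^ 2 + ‖d‖ ^ 2) := by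
  simpa [WithLp.prod_norm_eq_of_L2] using
    norm_add_le (WithLp.toLp 2 (a, b)) (WithLp.toLp 2 (c, d))

theorem mul_sqrt_norm_sq_add_norm_sq_le {E F : Type*} [SeminormedAddCommGroup E]
    [NormedSpace ℝ E] [SeminormedAddCommGroup F] [NormedSpace ℝ F] {θ t ξ e : ℝ} (hθ : 0 < θ)
    (ht : 0 ≤ t) (hξ : 0 < ξ) {p v : E} {q w : F} (hpq : ‖p‖ ^ 2 + ‖q‖ ^ 2 ≤ e / ξ)
    (hvw : ‖p + (θ * t) • v‖ ^ 2 + ‖q + (θ * t) • w‖ ^ 2 ≤ e) :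
    t * √(‖v‖ ^ 2 + ‖w‖ ^ 2) ≤ 1 / θ * (1 / √ξ + 1) * √e := by
  have htri := sqrt_norm_add_sq_add_norm_add_sq_le (p + (θ * t) • v) (-p) (q + (θ * t) • w) (-q)
  have hscale : ‖(θ * t) • v‖ ^ 2 + ‖(θ * t) • w‖ ^ 2 = (θ * t) ^ 2 * (‖v‖ ^ 2 + ‖w‖ ^ 2) := by
    rw [norm_smul, norm_smul, Real.norm_eq_abs, mul_pow, mul_pow, sq_abs]
    ring
  rw [add_neg_cancel_comm, add_neg_cancel_comm, norm_neg, norm_neg, hscale,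
    Real.sqrt_mul (sq_nonneg _), Real.sqrt_sq (by positivity)] at htri
  have hpq' : √(‖p‖ ^ 2 + ‖q‖ ^ 2) ≤ √e / √ξ := by
    rw [← Real.sqrt_div' e hξ.le]
    exact Real.sqrt_le_sqrt hpq
  calc t * √(‖v‖ ^ 2 + ‖w‖ ^ 2) = θ * t * √(‖v‖ ^ 2 + ‖w‖ ^ 2) / θ := by field_simp
    _ ≤ (√e + √e / √ξ) / θ := by gcongr; linarith [Real.sqrt_le_sqrt hvw]
    _ = 1 / θ * (1 / √ξ + 1) * √e := by ring

section PrimalDual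

variable {X Y : Type*} [NormedAddCommGroup X] [InnerProductSpace ℝ X]
  [NormedAddCommGroup Y] [InnerProductSpace ℝ Y]
  {f : X → ℝ} {f' : X → X} {A : X →L[ℝ] Y} {b : Y} {β : ℝ}

theorem augLagrangian_of_apply_eq (β : ℝ) {z : X} (hz : A z = b) (μ : Y) :
    augLagrangian f A b β z μ = f z := by
  simp [augLagrangian, hz]

variable [CompleteSpace X] [CompleteSpace Y]

noncomputable def augLagrangianGrad (f' : X → X) (A : X →L[ℝ] Y) (b : Y) (β : ℝ) (u : X)
    (μ : Y) : X :=
  f' u + (A†) μ + β • (A†) (A u - b)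

theorem augLagrangianGrad_add_right (u : X) (μ ν : Y) :
    augLagrangianGrad f' A b β u (μ + ν) = augLagrangianGrad f' A b β u μ + (A†) ν := by
  simp only [augLagrangianGrad, map_add]
  abel

theorem hasGradientAt_augLagrangian {u : X} (hf : HasGradientAt f (f' u) u) (μ : Y) :
    HasGradientAt (augLagrangian f A b β · μ) (augLagrangianGrad f' A b β u μ) u := by
  have hres : HasFDerivAt (fun v => A v - b) A u := A.hasFDerivAt.sub_const b
  have h := (hf.hasFDerivAt.add (((innerSL ℝ μ).hasFDerivAt).comp u hres)).add
    (hres.norm_sq.const_mul (β / 2))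
  rw [hasGradientAt_iff_hasFDerivAt]
  refine h.congr_fderiv ?_
  ext v
  simp [augLagrangianGrad, ContinuousLinearMap.adjoint_inner_left]
  ring

variable {xs : X} {ls : Y}

theorem augLagrangian_sub_nonneg (hf : ConvexOn ℝ univ f) (hgrad : HasGradientAt f (f' xs) xs)
    (hβ : 0 ≤ β) (hopt1 : f' xs + (A†) ls = 0) (hopt2 : A xs = b) (u : X) (μ : Y) :
    0 ≤ augLagrangian f A b β u ls - augLagrangian f A b β xs μ := by
  have hgap := hf.inner_sub_le_sub_of_hasGradientAt hgrad u
  rw [eq_neg_of_add_eq_zero_left hopt1, inner_neg_left,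
    ContinuousLinearMap.adjoint_inner_left, map_sub, hopt2] at hgap
  have hpenalty : 0 ≤ β / 2 * ‖A u - b‖ ^ 2 := by positivity
  rw [augLagrangian_of_apply_eq β hopt2, augLagrangian]
  linarith

theorem augLagrangian_sub_le_inner (hf : ConvexOn ℝ univ f) {u : X}
    (hgrad : HasGradientAt f (f' u) u) (hβ : 0 ≤ β) (hopt2 : A xs = b) (μ : Y) :
    augLagrangian f A b β u ls - augLagrangian f A b β xs μ
      ≤ ⟪augLagrangianGrad f' A b β u ls, u - xs⟫ := by
  have hgap := hf.inner_sub_le_sub_of_hasGradientAt hgrad xs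
  rw [← neg_sub, inner_neg_right] at hgap
  have hres : A (u - xs) = A u - b := by rw [map_sub, hopt2]
  rw [augLagrangian_of_apply_eq β hopt2, augLagrangian, augLagrangianGrad]
  simp only [inner_add_left, real_inner_smul_left, ContinuousLinearMap.adjoint_inner_left, hres,
    real_inner_self_eq_norm_sq]
  nlinarith [sq_nonneg ‖A u - b‖]

variable {α θ : ℝ} {x x' x'' : ℝ → X} {l l' l'' : ℝ → Y} {z : X} {μ : Y} {t : ℝ}

theorem hasDerivAt_pdEnergy (hgrad : HasGradientAt f (f' (x t)) (x t))
    (hx : HasDerivAt x (x' t) t) (hx' : HasDerivAt x' (x'' t) t)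
    (hl : HasDerivAt l (l' t) t) (hl' : HasDerivAt l' (l'' t) t) :
    HasDerivAt (pdEnergy f A b α β θ x x' l l' z μ)
      (2 * θ ^ 2 * t * (augLagrangian f A b β (x t) μ - augLagrangian f A b β z (l t))
        + θ ^ 2 * t ^ 2 * (⟪augLagrangianGrad f' A b β (x t) μ, x' t⟫ - ⟪l' t, A z - b⟫)
        + ⟪x t - z + (θ * t) • x' t, (1 + θ) • x' t + (θ * t) • x'' t⟫
        + ⟪l t - μ + (θ * t) • l' t, (1 + θ) • l' t + (θ * t) • l'' t⟫
        + (θ * α - θ - 1) * (⟪x t - z, x' t⟫ + ⟪l t - μ, l' t⟫)) t := by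
  have hLx : HasDerivAt (fun s => augLagrangian f A b β (x s) μ)
      ⟪augLagrangianGrad f' A b β (x t) μ, x' t⟫ t :=
    (hasGradientAt_augLagrangian hgrad μ).comp_hasDerivAt hx
  have hLl : HasDerivAt (fun s => augLagrangian f A b β z (l s)) ⟪l' t, A z - b⟫ t := by
    simpa [augLagrangian] using hl.inner ℝ (hasDerivAt_const t (A z - b))
  have hweight : HasDerivAt (fun s => θ ^ 2 * s ^ 2) (2 * θ ^ 2 * t) t := by
    simpa [mul_comm, mul_left_comm] using (hasDerivAt_pow 2 t).const_mul (θ ^ 2)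
  have hvx := (hasDerivAt_sub_add_mul_smul (θ := θ) hx hx' z).norm_sq
  have hvl := (hasDerivAt_sub_add_mul_smul (θ := θ) hl hl' μ).norm_sq
  have h := ((hweight.mul (hLx.sub hLl)).add ((hvx.add hvl).const_mul (1 / 2))).add
    (((hx.sub_const z).norm_sq.add (hl.sub_const μ).norm_sq).const_mul ((θ * α - θ - 1) / 2))
  refine h.congr_deriv ?_
  simp only [Pi.sub_apply]
  ring

theorem hasDerivAt_pdEnergy_of_ode (ht : t ≠ 0) (hgrad : HasGradientAt f (f' (x t)) (x t))
    (hx : HasDerivAt x (x' t) t) (hx' : HasDerivAt x' (x'' t) t)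
    (hl : HasDerivAt l (l' t) t) (hl' : HasDerivAt l' (l'' t) t)
    (hode1 : x'' t + (α / t) • x' t + f' (x t) + (A†) (l t + (θ * t) • l' t)
        + β • (A†) (A (x t) - b) = 0)
    (hode2 : l'' t + (α / t) • l' t - (A (x t + (θ * t) • x' t) - b) = 0) :
    HasDerivAt (pdEnergy f A b α β θ x x' l l' z μ)
      (θ * t * (2 * θ * (augLagrangian f A b β (x t) μ - augLagrangian f A b β z (l t))
          - ⟪augLagrangianGrad f' A b β (x t) μ, x t - z⟫ + ⟪l t - μ, A z - b⟫)
        - (θ * α - θ - 1) * (θ * t) * (‖x' t‖ ^ 2 + ‖l' t‖ ^ 2)) t := by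
  have hvx : (1 + θ) • x' t + (θ * t) • x'' t = -((θ * α - θ - 1) • x' t)
      - (θ * t) • (augLagrangianGrad f' A b β (x t) μ + (A†) (l t - μ + (θ * t) • l' t)) := by
    rw [← augLagrangianGrad_add_right, sub_add_eq_add_sub, add_sub_cancel, augLagrangianGrad]
    linear_combination (norm := match_scalars <;> field_simp <;> ring) (θ * t) • hode1
  have hvl : (1 + θ) • l' t + (θ * t) • l'' t = -((θ * α - θ - 1) • l' t)
      + (θ * t) • (A (x t - z + (θ * t) • x' t) + (A z - b)) := by
    rw [map_add, map_smul] at hode2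
    rw [map_add, map_sub, map_smul]
    linear_combination (norm := match_scalars <;> field_simp <;> ring) (θ * t) • hode2
  have hcoupling : ∀ (P : X) (Q : Y) (g : X) (c : Y) (ξ s : ℝ),
      ⟪P, -(ξ • x' t) - s • (g + (A†) Q)⟫ + ⟪Q, -(ξ • l' t) + s • (A P + c)⟫
        = -ξ * (⟪P, x' t⟫ + ⟪Q, l' t⟫) - s * ⟪P, g⟫ + s * ⟪Q, c⟫ := by
    intro P Q g c ξ s
    simp only [inner_add_right, inner_sub_right, inner_neg_right, real_inner_smul_right,
      ContinuousLinearMap.adjoint_inner_right, real_inner_comm (A P) Q]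
    ring
  refine (hasDerivAt_pdEnergy hgrad hx hx' hl hl').congr_deriv ?_
  rw [hvx, hvl]
  linear_combination (norm := skip) hcoupling (x t - z + (θ * t) • x' t)
    (l t - μ + (θ * t) • l' t) (augLagrangianGrad f' A b β (x t) μ) (A z - b) (θ * α - θ - 1) (θ * t)
  simp only [inner_add_left, real_inner_smul_left, real_inner_self_eq_norm_sq,
    real_inner_comm (x t - z) (augLagrangianGrad f' A b β (x t) μ),
    real_inner_comm (x' t) (augLagrangianGrad f' A b β (x t) μ)]
  ring

theorem pdEnergy_antitoneOn (hf : ConvexOn ℝ univ f) (hgrad : ∀ u, HasGradientAt f (f' u) u)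
    {t₀ : ℝ} (ht₀ : 0 < t₀) (hβ : 0 ≤ β) (hθ : 0 ≤ θ) (hθ2 : θ ≤ 1 / 2)
    (hξ : 0 ≤ θ * α - θ - 1)
    (hx1 : ∀ t ∈ Ici t₀, HasDerivAt x (x' t) t) (hx2 : ∀ t ∈ Ici t₀, HasDerivAt x' (x'' t) t)
    (hl1 : ∀ t ∈ Ici t₀, HasDerivAt l (l' t) t) (hl2 : ∀ t ∈ Ici t₀, HasDerivAt l' (l'' t) t)
    (hode1 : ∀ t ∈ Ici t₀, x'' t + (α / t) • x' t + f' (x t)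
        + (A†) (l t + (θ * t) • l' t) + β • (A†) (A (x t) - b) = 0)
    (hode2 : ∀ t ∈ Ici t₀, l'' t + (α / t) • l' t - (A (x t + (θ * t) • x' t) - b) = 0)
    (hopt1 : f' xs + (A†) ls = 0) (hopt2 : A xs = b) :
    AntitoneOn (pdEnergy f A b α β θ x x' l l' xs ls) (Ici t₀) := by
  have hderiv : ∀ t ∈ Ici t₀, HasDerivAt (pdEnergy f A b α β θ x x' l l' xs ls)
      (θ * t * (2 * θ * (augLagrangian f A b β (x t) ls - augLagrangian f A b β xs (l t))
          - ⟪augLagrangianGrad f' A b β (x t) ls, x t - xs⟫ + ⟪l t - ls, A xs - b⟫)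
        - (θ * α - θ - 1) * (θ * t) * (‖x' t‖ ^ 2 + ‖l' t‖ ^ 2)) t := fun t ht =>
    hasDerivAt_pdEnergy_of_ode (ht₀.trans_le ht).ne' (hgrad _) (hx1 t ht) (hx2 t ht) (hl1 t ht)
      (hl2 t ht) (hode1 t ht) (hode2 t ht)
  refine antitoneOn_of_hasDerivWithinAt_nonpos (convex_Ici t₀)
    (fun t ht => (hderiv t ht).continuousAt.continuousWithinAt)
    (fun t ht => (hderiv t (interior_subset ht)).hasDerivWithinAt) fun t ht => ?_
  rw [interior_Ici] at ht
  have hθt : 0 ≤ θ * t := mul_nonneg hθ (ht₀.trans ht).le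
  have hgap_nonneg := augLagrangian_sub_nonneg hf (hgrad xs) hβ hopt1 hopt2 (x t) (l t)
  have hgap_le := augLagrangian_sub_le_inner (ls := ls) hf (hgrad (x t)) hβ hopt2 (l t)
  rw [hopt2, sub_self, inner_zero_right, add_zero]
  have hgap_half := mul_le_mul_of_nonneg_right (by linarith : 2 * θ ≤ 1) hgap_nonneg
  have hdecay := mul_nonneg (mul_nonneg hξ hθt) (by positivity : 0 ≤ ‖x' t‖ ^ 2 + ‖l' t‖ ^ 2)
  nlinarith

theorem le_pdEnergy (hf : ConvexOn ℝ univ f) (hgrad : HasGradientAt f (f' xs) xs) (hβ : 0 ≤ β)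
    (hopt1 : f' xs + (A†) ls = 0) (hopt2 : A xs = b) (t : ℝ) :
    1 / 2 * (‖x t - xs + (θ * t) • x' t‖ ^ 2 + ‖l t - ls + (θ * t) • l' t‖ ^ 2)
      + (θ * α - θ - 1) / 2 * (‖x t - xs‖ ^ 2 + ‖l t - ls‖ ^ 2)
      ≤ pdEnergy f A b α β θ x x' l l' xs ls t := by
  have hgap := augLagrangian_sub_nonneg hf hgrad hβ hopt1 hopt2 (x t) (l t)
  have := mul_nonneg (by positivity : 0 ≤ θ ^ 2 * t ^ 2) hgap
  rw [pdEnergy]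
  linarith

end PrimalDual

theorem stmt2_general
    {X Y : Type*}
    [NormedAddCommGroup X] [InnerProductSpace ℝ X] [CompleteSpace X]
    [NormedAddCommGroup Y] [InnerProductSpace ℝ Y] [CompleteSpace Y]
    (f : X → ℝ) (f' : X → X) (A : X →L[ℝ] Y) (b : Y)
    (hconv : ConvexOn ℝ univ f)
    (hgrad : ∀ u, HasGradientAt f (f' u) u)
    (t₀ α β θ : ℝ) (ht₀ : 0 < t₀) (hα : 3 < α) (hβ : 0 ≤ β)
    (hθ1 : 1 / (α - 1) < θ) (hθ2 : θ ≤ 1 / 2)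
    (x : ℝ → X) (x' x'' : ℝ → X) (l : ℝ → Y) (l' l'' : ℝ → Y)
    (hx1 : ∀ t ∈ Ici t₀, HasDerivAt x (x' t) t)
    (hx2 : ∀ t ∈ Ici t₀, HasDerivAt x' (x'' t) t)
    (hl1 : ∀ t ∈ Ici t₀, HasDerivAt l (l' t) t)
    (hl2 : ∀ t ∈ Ici t₀, HasDerivAt l' (l'' t) t)
    (hode1 : ∀ t ∈ Ici t₀, x'' t + (α / t) • x' t + f' (x t)
        + (ContinuousLinearMap.adjoint A) (l t + (θ * t) • l' t)
        + β • (ContinuousLinearMap.adjoint A) (A (x t) - b) = 0)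
    (hode2 : ∀ t ∈ Ici t₀, l'' t + (α / t) • l' t
        - (A (x t + (θ * t) • x' t) - b) = 0)
    (xs : X) (ls : Y)
    (hopt1 : f' xs + (ContinuousLinearMap.adjoint A) ls = 0)
    (hopt2 : A xs = b)
    :
    ∀ t ∈ Ici t₀,
      ‖x t - xs‖ ^ 2 + ‖l t - ls‖ ^ 2
          ≤ 2 * pdEnergy f A b α β θ x x' l l' xs ls t₀ / (θ * α - θ - 1) ∧
      t * Real.sqrt (‖x' t‖ ^ 2 + ‖l' t‖ ^ 2)
          ≤ 1 / θ * (1 / Real.sqrt (θ * α - θ - 1) + 1) *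
            Real.sqrt (2 * pdEnergy f A b α β θ x x' l l' xs ls t₀) := by
  have hα1 : 0 < α - 1 := by linarith
  have hθ : 0 < θ := (one_div_pos.2 hα1).trans hθ1
  have hξ : 0 < θ * α - θ - 1 := by linarith [(div_lt_iff₀ hα1).1 hθ1]
  intro t ht
  have hdecay := pdEnergy_antitoneOn hconv hgrad ht₀ hβ hθ.le hθ2 hξ.le hx1 hx2 hl1 hl2 hode1
    hode2 hopt1 hopt2 self_mem_Ici ht ht
  have hlow := le_pdEnergy (α := α) (θ := θ) (x := x) (x' := x') (l := l) (l' := l') hconv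
    (hgrad xs) hβ hopt1 hopt2 t
  have hv : 0 ≤ ‖x t - xs + (θ * t) • x' t‖ ^ 2 + ‖l t - ls + (θ * t) • l' t‖ ^ 2 := by positivity
  have hp : 0 ≤ (θ * α - θ - 1) / 2 * (‖x t - xs‖ ^ 2 + ‖l t - ls‖ ^ 2) := by positivity
  have hdist : ‖x t - xs‖ ^ 2 + ‖l t - ls‖ ^ 2
      ≤ 2 * pdEnergy f A b α β θ x x' l l' xs ls t₀ / (θ * α - θ - 1) := by
    rw [le_div_iff₀ hξ]
    linarith
  exact ⟨hdist, mul_sqrt_norm_sq_add_norm_sq_le hθ (ht₀.trans_le ht).le hξ hdist (by linarith)⟩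

theorem stmt2
    {X Y : Type*}
    [NormedAddCommGroup X] [InnerProductSpace ℝ X] [CompleteSpace X]
    [NormedAddCommGroup Y] [InnerProductSpace ℝ Y] [CompleteSpace Y]
    (f : X → ℝ) (f' : X → X) (A : X →L[ℝ] Y) (b : Y)
    (hconv : ConvexOn ℝ univ f)
    (hgrad : ∀ u, HasGradientAt f (f' u) u)
    (hf'cont : Continuous f')
    (t₀ α β θ : ℝ) (ht₀ : 0 < t₀) (hα : 3 < α) (hβ : 0 ≤ β)
    (hθ1 : 1 / (α - 1) < θ) (hθ2 : θ ≤ 1 / 2)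
    (x : ℝ → X) (x' x'' : ℝ → X) (l : ℝ → Y) (l' l'' : ℝ → Y)
    (hx1 : ∀ t ∈ Ici t₀, HasDerivAt x (x' t) t)
    (hx2 : ∀ t ∈ Ici t₀, HasDerivAt x' (x'' t) t)
    (hx3 : ContinuousOn x'' (Ici t₀))
    (hl1 : ∀ t ∈ Ici t₀, HasDerivAt l (l' t) t)
    (hl2 : ∀ t ∈ Ici t₀, HasDerivAt l' (l'' t) t)
    (hl3 : ContinuousOn l'' (Ici t₀))
    (hode1 : ∀ t ∈ Ici t₀, x'' t + (α / t) • x' t + f' (x t)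
        + (ContinuousLinearMap.adjoint A) (l t + (θ * t) • l' t)
        + β • (ContinuousLinearMap.adjoint A) (A (x t) - b) = 0)
    (hode2 : ∀ t ∈ Ici t₀, l'' t + (α / t) • l' t
        - (A (x t + (θ * t) • x' t) - b) = 0)
    (xs : X) (ls : Y)
    (hopt1 : f' xs + (ContinuousLinearMap.adjoint A) ls = 0)
    (hopt2 : A xs = b)
    :
    ∀ t ∈ Ici t₀,
      ‖x t - xs‖ ^ 2 + ‖l t - ls‖ ^ 2
          ≤ 2 * pdEnergy f A b α β θ x x' l l' xs ls t₀ / (θ * α - θ - 1) ∧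
      t * Real.sqrt (‖x' t‖ ^ 2 + ‖l' t‖ ^ 2)
          ≤ 1 / θ * (1 / Real.sqrt (θ * α - θ - 1) + 1) *
            Real.sqrt (2 * pdEnergy f A b α β θ x x' l l' xs ls t₀) :=
  stmt2_general f f' A b hconv hgrad t₀ α β θ ht₀ hα hβ hθ1 hθ2 x x' x'' l l' l'' hx1 hx2 hl1 hl2
    hode1 hode2 xs ls hopt1 hopt2
end

section
/- Let X and Y be real Hilbert spaces, f : X → ℝ a convex continuously differentiable function whose gradient ∇f is ℓ-Lipschitz continuous for some ℓ > 0, A : X → Y a continuous linear operator with adjoint A*, and b ∈ Y. If (x*,λ*) and (x**,λ**) are both primal-dual optimal solutions, i.e. ∇f(x*) + A*λ* = 0, Ax* = b, ∇f(x**) + A*λ** = 0 and Ax** = b, then ∇f(x*) = ∇f(x**) and A*λ* = A*λ**. -/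
/-! The optimality conditions give `∇f x* - ∇f x** = A* (λ** - λ*)`, while `x* - x**` lies in
`ker A`; hence `⟪∇f x* - ∇f x**, x* - x**⟫ = 0`. For a convex differentiable `f` this forces the two
gradients to coincide: the gradient inequalities between `x*` and `x**` become equalities, so
`∇f x**` is a subgradient of `f` at `x*`, and a differentiable function has no subgradient other
than its gradient. -/

open Set
open scoped RealInnerProductSpace

section Gradient

variable {X : Type*} [NormedAddCommGroup X] [InnerProductSpace ℝ X] [CompleteSpace X]
  {f : X → ℝ} {g s x y : X}

theorem ConvexOn.add_inner_le_of_hasGradientAt (hf : ConvexOn ℝ univ f)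
    (hg : HasGradientAt f g x) (y : X) : f x + ⟪g, y - x⟫ ≤ f y := by
  have hline : ConvexOn ℝ univ (f ∘ AffineMap.lineMap (k := ℝ) x y) := by
    simpa using hf.comp_affineMap (AffineMap.lineMap (k := ℝ) x y)
  have hderiv : HasDerivAt (f ∘ AffineMap.lineMap (k := ℝ) x y) ⟪g, y - x⟫ 0 := by
    simpa using hg.hasFDerivAt.comp_hasDerivAt_of_eq (0 : ℝ) AffineMap.hasDerivAt_lineMap
      (by simp)
  have hslope := hline.le_slope_of_hasDerivAt (mem_univ 0) (mem_univ 1) zero_lt_one hderiv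
  simp only [slope_def_field, Function.comp_apply, AffineMap.lineMap_apply_one,
    AffineMap.lineMap_apply_zero, sub_zero, div_one] at hslope
  linarith

theorem HasGradientAt.eq_of_forall_add_inner_le (hg : HasGradientAt f g x)
    (hs : ∀ y, f x + ⟪s, y - x⟫ ≤ f y) : g = s := by
  have hmin : IsLocalMin (fun y => f y - ⟪s, y⟫) x :=
    Filter.Eventually.of_forall fun y => by
      have := hs y
      rw [inner_sub_right] at this
      dsimp only
      linarith
  have hderiv : HasFDerivAt (fun y => f y - ⟪s, y⟫) (InnerProductSpace.toDual ℝ X (g - s)) x := by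
    rw [map_sub]
    exact hg.hasFDerivAt.sub (InnerProductSpace.toDual ℝ X s).hasFDerivAt
  exact sub_eq_zero.1 ((InnerProductSpace.toDual ℝ X).map_eq_zero_iff.1
    (hmin.hasFDerivAt_eq_zero hderiv))

theorem ConvexOn.gradient_eq_of_inner_sub_eq_zero {gx gy : X} (hf : ConvexOn ℝ univ f)
    (hx : HasGradientAt f gx x) (hy : HasGradientAt f gy y) (h : ⟪gx - gy, x - y⟫ = 0) :
    gx = gy := by
  refine hx.eq_of_forall_add_inner_le fun z => ?_
  have hxy := hf.add_inner_le_of_hasGradientAt hx y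
  have hyz := hf.add_inner_le_of_hasGradientAt hy z
  have hyx : ⟪gx, y - x⟫ = -⟪gy, x - y⟫ := by
    rw [inner_sub_left, sub_eq_zero] at h
    rw [← h, ← inner_neg_right, neg_sub]
  have hsplit : ⟪gy, z - x⟫ = ⟪gy, z - y⟫ - ⟪gy, x - y⟫ := by
    rw [← inner_sub_right, sub_sub_sub_cancel_right]
  linarith

end Gradient

theorem stmt17_general
    {X Y : Type*}
    [NormedAddCommGroup X] [InnerProductSpace ℝ X] [CompleteSpace X]
    [NormedAddCommGroup Y] [InnerProductSpace ℝ Y] [CompleteSpace Y]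
    (f : X → ℝ) (f' : X → X) (A : X →L[ℝ] Y) (b : Y)
    (hconv : ConvexOn ℝ univ f)
    (hgrad : ∀ u, HasGradientAt f (f' u) u)
    (xs xss : X) (ls lss : Y)
    (hopt1 : f' xs + (ContinuousLinearMap.adjoint A) ls = 0) (hopt2 : A xs = b)
    (hopt1' : f' xss + (ContinuousLinearMap.adjoint A) lss = 0) (hopt2' : A xss = b) :
    f' xs = f' xss ∧
    (ContinuousLinearMap.adjoint A) ls = (ContinuousLinearMap.adjoint A) lss := by
  have hxs := eq_neg_of_add_eq_zero_left hopt1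
  have hxss := eq_neg_of_add_eq_zero_left hopt1'
  have horth : ⟪f' xs - f' xss, xs - xss⟫ = 0 := by
    rw [hxs, hxss, neg_sub_neg, ← map_sub, ContinuousLinearMap.adjoint_inner_left, map_sub,
      hopt2, hopt2', sub_self, inner_zero_right]
  have hf' := hconv.gradient_eq_of_inner_sub_eq_zero (hgrad xs) (hgrad xss) horth
  refine ⟨hf', neg_injective ?_⟩
  rw [← hxs, ← hxss, hf']

theorem stmt17
    {X Y : Type*}
    [NormedAddCommGroup X] [InnerProductSpace ℝ X] [CompleteSpace X]
    [NormedAddCommGroup Y] [InnerProductSpace ℝ Y] [CompleteSpace Y]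
    (f : X → ℝ) (f' : X → X) (A : X →L[ℝ] Y) (b : Y)
    (hconv : ConvexOn ℝ univ f)
    (hgrad : ∀ u, HasGradientAt f (f' u) u)
    (ℓ : NNReal) (hℓ : 0 < ℓ) (hlip : LipschitzWith ℓ f')
    (xs xss : X) (ls lss : Y)
    (hopt1 : f' xs + (ContinuousLinearMap.adjoint A) ls = 0) (hopt2 : A xs = b)
    (hopt1' : f' xss + (ContinuousLinearMap.adjoint A) lss = 0) (hopt2' : A xss = b) :
    f' xs = f' xss ∧
    (ContinuousLinearMap.adjoint A) ls = (ContinuousLinearMap.adjoint A) lss :=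
  stmt17_general f f' A b hconv hgrad xs xss ls lss hopt1 hopt2 hopt1' hopt2'
end
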